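/- Every graph in G_2 is (theta, pyramid, long prism, broken wheel)-free, i.e., no graph in G_2 contains an induced subgraph isomorphic to a theta, a pyramid, a long prism, or a broken wheel. -/

import Mathlib

/-!
Each of the four configurations contains two nonadjacent vertices `a`, `b`, three `a`–`b` paths
meeting only at their ends, and an interior vertex on each path, such that the three chosen
vertices are pairwise nonadjacent and every edge avoiding them lies on one of the paths. In a
theta, choose the three neighbours of one branch vertex `a`. In a pyramid with long paths `P₁`, `P₂` from
the apex `a`, take `b = b₁` and the second vertices of `P₁`, `P₂` together with `b₃` (not the
second vertex of `P₃`, which would leave the triangle edge `b₂b₃` off the paths). In a prism with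
long path `P₁`, separate `a₁` from `b₂` by the second vertex of `P₁`, `a₂` and `b₃`. In a broken
wheel with centre `v`, pick neighbours `p`, `q` of `v` in different components of its
neighbourhood; each of the two arcs of the hole between them has a non-neighbour of `v`, and these
two together with `v` separate `p` from `q`.

The vertices preceding the chosen ones on the paths form a side of `a` closed up to the chosen
vertices, and each path shows that none of them can be dropped; so they form a minimal separator,
and three pairwise nonadjacent vertices are not covered by two cliques. Finally `𝒢₂` is closed
under induced subgraphs, as a minimal `(a,b)`-separator `S` of `G[s]` lies in every
`(a,b)`-separator of `G` contained in `S ∪ (V ∖ s)`, in particular in a minimal one.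
-/

open SimpleGraph

namespace PaperSep

variable {V : Type} {W : Type}

/-- There is a walk from `a` to `b` in `G` all of whose vertices avoid the set `S`. -/
def ConnAvoid (G : SimpleGraph V) (S : Set V) (a b : V) : Prop :=
  ∃ p : G.Walk a b, ∀ v ∈ p.support, v ∉ S

/-- `S` is an `(a,b)`-separator of `G`. -/
def IsSep (G : SimpleGraph V) (a b : V) (S : Set V) : Prop :=
  a ∉ S ∧ b ∉ S ∧ ¬ ConnAvoid G S a b

/-- `S` is a minimal `(a,b)`-separator of `G`. -/
def IsMinSep (G : SimpleGraph V) (a b : V) (S : Set V) : Prop :=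
  IsSep G a b S ∧ ∀ T ⊂ S, ¬ IsSep G a b T

/-- `S` is a minimal separator of `G`. -/
def IsMinimalSeparator (G : SimpleGraph V) (S : Set V) : Prop :=
  ∃ a b : V, a ≠ b ∧ ¬ G.Adj a b ∧ IsMinSep G a b S

/-- `K` is a cutset of `G`, i.e. `G − K` is disconnected. -/
def IsCutset (G : SimpleGraph V) (K : Set V) : Prop :=
  ∃ a b : V, a ∉ K ∧ b ∉ K ∧ ¬ ConnAvoid G K a b

/-- `K` is a minimal cutset of `G`. -/
def IsMinimalCutset (G : SimpleGraph V) (K : Set V) : Prop :=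
  IsCutset G K ∧ ∀ T ⊂ K, ¬ IsCutset G T

/-- A class of finite graphs. -/
def GraphClass : Type 1 :=
  ∀ (α : Type) [Finite α], SimpleGraph α → Prop

/-- A class is hereditary if it is closed under isomorphism and induced subgraphs. -/
def Hereditary (C : GraphClass) : Prop :=
  ∀ (α : Type) [Finite α] (G : SimpleGraph α) (β : Type) [Finite β] (H : SimpleGraph β)
    (s : Set α), Nonempty (H ≃g G.induce s) → C α G → C β H

/-- `G ∈ 𝒢_C` : every minimal separator of `G` induces a graph in `C`. -/
def MemGC (C : GraphClass) {α : Type} [Finite α] (G : SimpleGraph α) : Prop :=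
  ∀ S : Set α, IsMinimalSeparator G S → C ↥S (G.induce S)

/-- The class `𝒢_C`. -/
def GCclass (C : GraphClass) : GraphClass :=
  fun α inst G => @MemGC C α inst G

/-- `S` is a union of `k` (possibly empty) cliques of `G`. -/
def UnionOfCliques (G : SimpleGraph V) (k : ℕ) (S : Set V) : Prop :=
  ∃ f : Fin k → Set V, (∀ i, G.IsClique (f i)) ∧ S = ⋃ i, f i

/-- `G ∈ 𝒢_k` : every minimal separator of `G` is a union of `k` cliques. -/
def MemGk (k : ℕ) (G : SimpleGraph V) : Prop :=
  ∀ S : Set V, IsMinimalSeparator G S → UnionOfCliques G k S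

/-- The class `𝒢_k`. -/
def Gkclass (k : ℕ) : GraphClass := fun _ _ G => MemGk k G

/-- The class `𝒞_k` of graphs whose vertex set is a union of `k` cliques. -/
def Ckclass (k : ℕ) : GraphClass := fun _ _ G => UnionOfCliques G k Set.univ

/-- An induced minor model of `H` in `G`. -/
def IsIMModel (G : SimpleGraph V) (H : SimpleGraph W) (X : W → Set V) : Prop :=
  (∀ w, (X w).Nonempty) ∧
  (∀ u w : W, u ≠ w → Disjoint (X u) (X w)) ∧
  (∀ w, (G.induce (X w)).Connected) ∧
  (∀ u w : W, u ≠ w → (H.Adj u w ↔ ∃ a ∈ X u, ∃ b ∈ X w, G.Adj a b))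

/-- `H` is an induced minor of `G`. -/
def IsInducedMinor (H : SimpleGraph W) (G : SimpleGraph V) : Prop :=
  ∃ X : W → Set V, IsIMModel G H X

/-- The class `C` is closed under induced minors. -/
def IMClosed (C : GraphClass) : Prop :=
  ∀ (α : Type) [Finite α] (G : SimpleGraph α) (β : Type) [Finite β] (H : SimpleGraph β),
    C α G → IsInducedMinor H G → C β H

/-- The class `C` is closed under the addition of edges. -/
def EdgeAddClosed (C : GraphClass) : Prop :=
  ∀ (α : Type) [Finite α] (G : SimpleGraph α) (a b : α), a ≠ b → ¬ G.Adj a b →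
    C α G → C α (G ⊔ SimpleGraph.edge a b)

/-- `G ∈ ℳ_C` : `G ∉ C` but every proper induced minor of `G` is in `C`.
(For finite graphs, the proper induced minors of `G` are exactly the induced minors of `G`
not isomorphic to `G`.) -/
def MemMC (C : GraphClass) {α : Type} [Finite α] (G : SimpleGraph α) : Prop :=
  ¬ C α G ∧
  ∀ (β : Type) [Finite β] (H : SimpleGraph β),
    IsInducedMinor H G → IsEmpty (H ≃g G) → C β H

/-- The complete join of two graphs. -/
def join (G : SimpleGraph V) (H : SimpleGraph W) : SimpleGraph (V ⊕ W) :=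
  SimpleGraph.fromRel (fun x y =>
    match x, y with
    | Sum.inl a, Sum.inl b => G.Adj a b
    | Sum.inr a, Sum.inr b => H.Adj a b
    | _, _ => True)

/-- The class `C` is closed under the addition of universal vertices (up to isomorphism). -/
def UnivAddClosed (C : GraphClass) : Prop :=
  ∀ (α : Type) [Finite α] (G : SimpleGraph α) (β : Type) [Finite β] (H : SimpleGraph β),
    C α G → Nonempty (H ≃g join (⊥ : SimpleGraph (Fin 1)) G) → C β H

/-- `G` has a universal vertex. -/
def HasUniversalVertex (G : SimpleGraph V) : Prop :=
  ∃ v : V, ∀ w : V, w ≠ v → G.Adj v w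



/-- `G` is a theta: two nonadjacent vertices joined by three internally disjoint induced
paths of length at least two, with no other vertices or edges
(equivalently, a subdivision of `K_{2,3}`). -/
def IsTheta (G : SimpleGraph V) : Prop :=
  ∃ (a b : V) (P₁ P₂ P₃ : G.Walk a b),
    a ≠ b ∧
    P₁.IsPath ∧ P₂.IsPath ∧ P₃.IsPath ∧
    2 ≤ P₁.length ∧ 2 ≤ P₂.length ∧ 2 ≤ P₃.length ∧
    (∀ v : V, v ∈ P₁.support → v ∈ P₂.support → v = a ∨ v = b) ∧
    (∀ v : V, v ∈ P₁.support → v ∈ P₃.support → v = a ∨ v = b) ∧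
    (∀ v : V, v ∈ P₂.support → v ∈ P₃.support → v = a ∨ v = b) ∧
    (∀ v : V, v ∈ P₁.support ∨ v ∈ P₂.support ∨ v ∈ P₃.support) ∧
    (∀ u v : V, G.Adj u v ↔
      s(u, v) ∈ P₁.edges ∨ s(u, v) ∈ P₂.edges ∨ s(u, v) ∈ P₃.edges)

/-- `G` is a pyramid: an apex `a` joined to a triangle `b₁b₂b₃` by three paths sharing only
`a`, at least two of which have length at least two, with no other vertices or edges. -/
def IsPyramid (G : SimpleGraph V) : Prop :=
  ∃ (a b₁ b₂ b₃ : V) (P₁ : G.Walk a b₁) (P₂ : G.Walk a b₂) (P₃ : G.Walk a b₃),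
    G.Adj b₁ b₂ ∧ G.Adj b₁ b₃ ∧ G.Adj b₂ b₃ ∧
    P₁.IsPath ∧ P₂.IsPath ∧ P₃.IsPath ∧
    1 ≤ P₁.length ∧ 1 ≤ P₂.length ∧ 1 ≤ P₃.length ∧
    ((2 ≤ P₁.length ∧ 2 ≤ P₂.length) ∨ (2 ≤ P₁.length ∧ 2 ≤ P₃.length) ∨
      (2 ≤ P₂.length ∧ 2 ≤ P₃.length)) ∧
    (∀ v : V, v ∈ P₁.support → v ∈ P₂.support → v = a) ∧
    (∀ v : V, v ∈ P₁.support → v ∈ P₃.support → v = a) ∧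
    (∀ v : V, v ∈ P₂.support → v ∈ P₃.support → v = a) ∧
    (∀ v : V, v ∈ P₁.support ∨ v ∈ P₂.support ∨ v ∈ P₃.support) ∧
    (∀ u v : V, G.Adj u v ↔
      s(u, v) ∈ P₁.edges ∨ s(u, v) ∈ P₂.edges ∨ s(u, v) ∈ P₃.edges ∨
      s(u, v) = s(b₁, b₂) ∨ s(u, v) = s(b₁, b₃) ∨ s(u, v) = s(b₂, b₃))

/-- `G` is a prism: two disjoint triangles joined by three pairwise disjoint paths, with no
other vertices or edges. -/
def IsPrism (G : SimpleGraph V) : Prop :=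
  ∃ (a₁ a₂ a₃ b₁ b₂ b₃ : V) (P₁ : G.Walk a₁ b₁) (P₂ : G.Walk a₂ b₂) (P₃ : G.Walk a₃ b₃),
    G.Adj a₁ a₂ ∧ G.Adj a₁ a₃ ∧ G.Adj a₂ a₃ ∧
    G.Adj b₁ b₂ ∧ G.Adj b₁ b₃ ∧ G.Adj b₂ b₃ ∧
    P₁.IsPath ∧ P₂.IsPath ∧ P₃.IsPath ∧
    1 ≤ P₁.length ∧ 1 ≤ P₂.length ∧ 1 ≤ P₃.length ∧
    (∀ v : V, v ∈ P₁.support → v ∈ P₂.support → False) ∧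
    (∀ v : V, v ∈ P₁.support → v ∈ P₃.support → False) ∧
    (∀ v : V, v ∈ P₂.support → v ∈ P₃.support → False) ∧
    (∀ v : V, v ∈ P₁.support ∨ v ∈ P₂.support ∨ v ∈ P₃.support) ∧
    (∀ u v : V, G.Adj u v ↔
      s(u, v) ∈ P₁.edges ∨ s(u, v) ∈ P₂.edges ∨ s(u, v) ∈ P₃.edges ∨
      s(u, v) = s(a₁, a₂) ∨ s(u, v) = s(a₁, a₃) ∨ s(u, v) = s(a₂, a₃) ∨
      s(u, v) = s(b₁, b₂) ∨ s(u, v) = s(b₁, b₃) ∨ s(u, v) = s(b₂, b₃))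

/-- `G` is a long prism: a prism other than the complement of `C₆`, i.e. a prism in which at
least one of the three paths has length at least two. -/
def IsLongPrism (G : SimpleGraph V) : Prop :=
  ∃ (a₁ a₂ a₃ b₁ b₂ b₃ : V) (P₁ : G.Walk a₁ b₁) (P₂ : G.Walk a₂ b₂) (P₃ : G.Walk a₃ b₃),
    G.Adj a₁ a₂ ∧ G.Adj a₁ a₃ ∧ G.Adj a₂ a₃ ∧
    G.Adj b₁ b₂ ∧ G.Adj b₁ b₃ ∧ G.Adj b₂ b₃ ∧
    P₁.IsPath ∧ P₂.IsPath ∧ P₃.IsPath ∧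
    1 ≤ P₁.length ∧ 1 ≤ P₂.length ∧ 1 ≤ P₃.length ∧
    (2 ≤ P₁.length ∨ 2 ≤ P₂.length ∨ 2 ≤ P₃.length) ∧
    (∀ v : V, v ∈ P₁.support → v ∈ P₂.support → False) ∧
    (∀ v : V, v ∈ P₁.support → v ∈ P₃.support → False) ∧
    (∀ v : V, v ∈ P₂.support → v ∈ P₃.support → False) ∧
    (∀ v : V, v ∈ P₁.support ∨ v ∈ P₂.support ∨ v ∈ P₃.support) ∧
    (∀ u v : V, G.Adj u v ↔
      s(u, v) ∈ P₁.edges ∨ s(u, v) ∈ P₂.edges ∨ s(u, v) ∈ P₃.edges ∨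
      s(u, v) = s(a₁, a₂) ∨ s(u, v) = s(a₁, a₃) ∨ s(u, v) = s(a₂, a₃) ∨
      s(u, v) = s(b₁, b₂) ∨ s(u, v) = s(b₁, b₃) ∨ s(u, v) = s(b₂, b₃))

/-- `G` is a wheel: a hole (chordless cycle of length at least four) together with one
additional vertex having at least three neighbors on the hole. -/
def IsWheel (G : SimpleGraph V) : Prop :=
  ∃ (v x : V) (c : G.Walk x x),
    c.IsCycle ∧ 4 ≤ c.length ∧ v ∉ c.support ∧
    (∀ u : V, u = v ∨ u ∈ c.support) ∧
    (∀ u w : V, u ∈ c.support → w ∈ c.support → G.Adj u w → s(u, w) ∈ c.edges) ∧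
    3 ≤ {u : V | u ∈ c.support ∧ G.Adj v u}.ncard

/-- `G` is a broken wheel: a wheel in which the neighbors of the additional vertex induce a
disconnected subgraph of the hole. -/
def IsBrokenWheel (G : SimpleGraph V) : Prop :=
  ∃ (v x : V) (c : G.Walk x x),
    c.IsCycle ∧ 4 ≤ c.length ∧ v ∉ c.support ∧
    (∀ u : V, u = v ∨ u ∈ c.support) ∧
    (∀ u w : V, u ∈ c.support → w ∈ c.support → G.Adj u w → s(u, w) ∈ c.edges) ∧
    3 ≤ {u : V | u ∈ c.support ∧ G.Adj v u}.ncard ∧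
    ¬ (G.induce {u : V | u ∈ c.support ∧ G.Adj v u}).Connected

/-- `G` is diamond-free: it has no induced subgraph isomorphic to `K₄` minus an edge. -/
def DiamondFree (G : SimpleGraph V) : Prop :=
  ¬ ∃ a b c d : V, c ≠ d ∧ G.Adj a b ∧ G.Adj a c ∧ G.Adj a d ∧ G.Adj b c ∧ G.Adj b d ∧
    ¬ G.Adj c d

/-- The short `n`-prism: two `n`-vertex cliques joined by a perfect matching. -/
def completePrism (n : ℕ) : SimpleGraph (Fin n ⊕ Fin n) :=
  SimpleGraph.fromRel (fun x y =>
    match x, y with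
    | Sum.inl _, Sum.inl _ => True
    | Sum.inr _, Sum.inr _ => True
    | Sum.inl i, Sum.inr j => i = j
    | Sum.inr i, Sum.inl j => i = j)

/-- `G` is a complete prism, i.e. a short `n`-prism for some `n ≥ 3`. -/
def IsCompletePrism (G : SimpleGraph V) : Prop :=
  ∃ n : ℕ, 3 ≤ n ∧ Nonempty (G ≃g completePrism n)

/-- `G` is a cycle. -/
def IsCycleGraph (G : SimpleGraph V) : Prop :=
  ∃ n : ℕ, 3 ≤ n ∧ Nonempty (G ≃g cycleGraph n)

/-- `G` is a complete graph. -/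
def IsCompleteGraph (G : SimpleGraph V) : Prop :=
  ∀ u v : V, u ≠ v → G.Adj u v

/-- `G` has a clique-cutset. -/
def HasCliqueCutset (G : SimpleGraph V) : Prop :=
  ∃ K : Set V, G.IsClique K ∧ IsCutset G K

end PaperSep

namespace SimpleGraph.Walk

variable {V : Type*} {G : SimpleGraph V} {a b : V}

theorem exists_mem_support_of_closed {A S : Set V}
    (hA : ∀ u ∈ A, ∀ w, G.Adj u w → w ∈ A ∨ w ∈ S) (p : G.Walk a b) (ha : a ∈ A)
    (hb : b ∉ A) : ∃ v ∈ p.support, v ∈ S := by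
  induction p with
  | nil => exact absurd ha hb
  | cons h p ih =>
    rcases hA _ ha _ h with hc | hc
    · obtain ⟨v, hv, hvS⟩ := ih hc hb
      exact ⟨v, List.mem_cons_of_mem _ hv, hvS⟩
    · exact ⟨_, by simp, hc⟩

theorem snd_ne_start {p : G.Walk a b} (hp : 1 ≤ p.length) : p.snd ≠ a :=
  (p.adj_snd (not_nil_iff_lt_length.2 hp)).ne.symm

theorem IsPath.snd_ne_end {p : G.Walk a b} (hp : p.IsPath) (h : 2 ≤ p.length) : p.snd ≠ b :=
  fun e => by have := (hp.getVert_eq_end_iff (by omega)).1 e; omega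

theorem IsPath.ne_of_one_le_length {p : G.Walk a b} (hp : p.IsPath) (h : 1 ≤ p.length) : a ≠ b :=
  fun e => not_nil_iff_lt_length.2 h (hp.nil_iff_eq.2 e)

theorem IsPath.mem_support_takeUntil_of_mem_edges [DecidableEq V] {x u w : V} {p : G.Walk a b}
    (hp : p.IsPath) (hx : x ∈ p.support) (hu : u ∈ (p.takeUntil x hx).support) (hux : u ≠ x)
    (he : s(u, w) ∈ p.edges) : w ∈ (p.takeUntil x hx).support := by
  have hsplit := p.take_spec hx
  rw [← hsplit, edges_append, List.mem_append] at he
  rcases he with he | he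
  · exact (p.takeUntil x hx).snd_mem_support_of_mem_edges he
  · exact absurd rfl ((hsplit ▸ hp).ne_of_mem_support_of_append hux hu
      ((p.dropUntil x hx).fst_mem_support_of_mem_edges he))

theorem IsCycle.exists_isPath_union {x p q : V} {c : G.Walk x x} (hc : c.IsCycle)
    (hp : p ∈ c.support) (hq : q ∈ c.support) (hpq : p ≠ q) :
    ∃ X Y : G.Walk p q, X.IsPath ∧ Y.IsPath ∧
      (∀ u ∈ X.support, u ∈ Y.support → u = p ∨ u = q) ∧
      (∀ u, u ∈ c.support ↔ u ∈ X.support ∨ u ∈ Y.support) ∧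
      (∀ e ∈ c.edges, e ∈ X.edges ∨ e ∈ Y.edges) := by
  classical
  set c' := c.rotate p hp
  have hq' : q ∈ c'.support := (c.mem_support_rotate_iff p hp).2 hq
  set X := c'.takeUntil q hq'
  set D := c'.dropUntil q hq'
  have hsplit : X.append D = c' := c'.take_spec hq'
  have hc' : (X.append D).IsCycle := hsplit ▸ hc.rotate hp
  refine ⟨X, D.reverse, (hc.rotate hp).isPath_takeUntil hq',
    (hc'.isPath_of_append_right (not_nil_of_ne hpq)).reverse, fun u hX hY => ?_,
    fun u => ?_, fun e he => ?_⟩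
  · have hnd := hc'.support_nodup
    rw [tail_support_append] at hnd
    rw [support_reverse, List.mem_reverse] at hY
    rw [mem_support_iff] at hX hY
    by_contra! h
    exact List.disjoint_of_nodup_append hnd (hX.resolve_left h.1) (hY.resolve_left h.2)
  · have hu : u ∈ c'.support ↔ u ∈ c.support := c.mem_support_rotate_iff p hp
    rw [← hu, ← hsplit, mem_support_append_iff, support_reverse, List.mem_reverse]
  · have he' : e ∈ c'.edges := (c.rotate_edges p hp).mem_iff.2 he
    rw [← hsplit, edges_append, List.mem_append] at he'
    rwa [edges_reverse, List.mem_reverse]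

end SimpleGraph.Walk

namespace PaperSep

variable {V : Type}

section Separators

variable {G : SimpleGraph V} {a b : V} {S T : Set V}

theorem ConnAvoid.mono (h : ConnAvoid G T a b) (hST : S ⊆ T) : ConnAvoid G S a b :=
  let ⟨p, hp⟩ := h
  ⟨p, fun v hv hvS => hp v hv (hST hvS)⟩

theorem isSep_of_closed (A : Set V) (hA : ∀ u ∈ A, ∀ w, G.Adj u w → w ∈ A ∨ w ∈ S)
    (haA : a ∈ A) (hbA : b ∉ A) (haS : a ∉ S) (hbS : b ∉ S) : IsSep G a b S := by
  refine ⟨haS, hbS, fun ⟨p, hp⟩ => ?_⟩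
  obtain ⟨v, hv, hvS⟩ := p.exists_mem_support_of_closed hA haA hbA
  exact hp v hv hvS

theorem IsSep.ne (h : IsSep G a b S) : a ≠ b := by
  rintro rfl
  exact h.2.2 ⟨.nil, by simpa using h.1⟩

theorem IsSep.not_adj (h : IsSep G a b S) : ¬ G.Adj a b := fun hab =>
  h.2.2 ⟨hab.toWalk, by simpa using ⟨h.1, h.2.1⟩⟩

theorem IsMinSep.isMinimalSeparator (h : IsMinSep G a b S) : IsMinimalSeparator G S :=
  ⟨a, b, h.1.ne, h.1.not_adj, h⟩

theorem exists_isMinSep_subset [Finite V] (h : IsSep G a b T) :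
    ∃ S ⊆ T, IsMinSep G a b S := by
  induction hn : T.ncard using Nat.strong_induction_on generalizing T with
  | _ n ih =>
    by_cases hmin : ∀ S ⊂ T, ¬ IsSep G a b S
    · exact ⟨T, subset_rfl, h, hmin⟩
    push Not at hmin
    obtain ⟨S, hST, hS⟩ := hmin
    obtain ⟨S', hS'S, hS'⟩ := ih _ (hn ▸ Set.ncard_lt_ncard hST (Set.toFinite T)) hS rfl
    exact ⟨S', hS'S.trans hST.subset, hS'⟩

end Separators

theorem not_unionOfCliques_of_injective {G : SimpleGraph V} {k : ℕ} {S : Set V}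
    (x : Fin (k + 1) → V) (hx : Function.Injective x) (hxS : ∀ i, x i ∈ S)
    (hindep : ∀ i j, ¬ G.Adj (x i) (x j)) : ¬ UnionOfCliques G k S := by
  rintro ⟨f, hf, rfl⟩
  choose c hc using fun i => Set.mem_iUnion.1 (hxS i)
  obtain ⟨i, j, hij, hcij⟩ := Fintype.exists_ne_map_eq_of_card_lt c (by simp)
  exact hindep i j (hf (c i) (hc i) (hcij ▸ hc j) (hx.ne hij))

section Induce

variable {G : SimpleGraph V} {s : Set V} {a b : s}

theorem connAvoid_induce_iff {S : Set s} :
    ConnAvoid (G.induce s) S a b ↔ ConnAvoid G (Subtype.val '' S ∪ sᶜ) a b := by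
  constructor
  · rintro ⟨p, hp⟩
    let f := (Embedding.induce (G := G) s).toHom
    refine ⟨p.map f, fun v hv => ?_⟩
    obtain ⟨y, hy, rfl⟩ := List.mem_map.1 (p.support_map f ▸ hv)
    rintro (⟨z, hz, hzy⟩ | hys)
    · exact hp y hy (Subtype.ext hzy ▸ hz)
    · exact hys y.2
  · rintro ⟨p, hp⟩
    have hps : ∀ v ∈ p.support, v ∈ s := fun v hv => by_contra fun h => hp v hv (Or.inr h)
    refine ⟨(p.induce s hps).copy rfl rfl, fun y hy hyS => ?_⟩
    simp only [Walk.support_copy, Walk.support_induce, List.mem_attachWith] at hy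
    exact hp y hy (Or.inl ⟨y, hyS, rfl⟩)

theorem IsSep.of_induce {S : Set s} (h : IsSep (G.induce s) a b S) :
    IsSep G a b (Subtype.val '' S ∪ sᶜ) := by
  refine ⟨?_, ?_, fun hc => h.2.2 (connAvoid_induce_iff.2 hc)⟩
  · rintro (⟨y, hy, hya⟩ | has)
    exacts [h.1 (Subtype.ext hya ▸ hy), has a.2]
  · rintro (⟨y, hy, hyb⟩ | hbs)
    exacts [h.2.1 (Subtype.ext hyb ▸ hy), hbs b.2]

theorem IsMinSep.image_subset_of_induce {S : Set s} {T : Set V} (h : IsMinSep (G.induce s) a b S)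
    (hTS : T ⊆ Subtype.val '' S ∪ sᶜ) (hT : IsSep G a b T) : Subtype.val '' S ⊆ T := by
  rintro _ ⟨x, hxS, rfl⟩
  by_contra hxT
  have hsep : ¬ IsSep (G.induce s) a b (S \ {x}) :=
    h.2 _ (Set.sdiff_singleton_ssubset.2 hxS)
  have hconn : ConnAvoid (G.induce s) (S \ {x}) a b := by
    by_contra hc
    exact hsep ⟨fun ha => h.1.1 ha.1, fun hb => h.1.2.1 hb.1, hc⟩
  refine hT.2.2 ((connAvoid_induce_iff.1 hconn).mono fun v hv => ?_)
  rcases hTS hv with ⟨y, hy, rfl⟩ | hvs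
  · exact Or.inl ⟨y, ⟨hy, by rintro rfl; exact hxT hv⟩, rfl⟩
  · exact Or.inr hvs

end Induce

theorem MemGk.induce [Finite V] {G : SimpleGraph V} {k : ℕ} (hG : MemGk k G) (s : Set V) :
    MemGk k (G.induce s) := by
  rintro S ⟨a, b, -, -, hS⟩
  obtain ⟨T, hTS, hT⟩ := exists_isMinSep_subset hS.1.of_induce
  have hST := hS.image_subset_of_induce hTS hT.1
  obtain ⟨f, hf, hfT⟩ := hG T hT.isMinimalSeparator
  refine ⟨fun i => Subtype.val ⁻¹' f i ∩ S, fun i x hx y hy hxy => ?_, ?_⟩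
  · exact induce_adj.2 (hf i hx.1 hy.1 (Subtype.val_injective.ne hxy))
  · ext x
    simp only [Set.mem_iUnion, Set.mem_inter_iff, Set.mem_preimage]
    refine ⟨fun hx => ?_, fun ⟨_, _, hx⟩ => hx⟩
    obtain ⟨i, hi⟩ := Set.mem_iUnion.1 (hfT ▸ hST ⟨x, hx, rfl⟩)
    exact ⟨i, hi, hx⟩

theorem lt_cases_fin_three {i j : Fin 3} (h : i < j) :
    i = 0 ∧ j = 1 ∨ i = 0 ∧ j = 2 ∨ i = 1 ∧ j = 2 := by
  revert i j
  decide

theorem isMinSep_range_of_paths {ι : Type*} [Nonempty ι] {G : SimpleGraph V} {a b : V}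
    (P : ι → G.Walk a b) (x : ι → V) (hP : ∀ i, (P i).IsPath)
    (hPP : ∀ i j, i ≠ j → ∀ u ∈ (P i).support, u ∈ (P j).support → u = a ∨ u = b)
    (hx : ∀ i, x i ∈ (P i).support) (hxa : ∀ i, x i ≠ a) (hxb : ∀ i, x i ≠ b)
    (hE : ∀ u w, G.Adj u w → u ∉ Set.range x → w ∉ Set.range x →
      ∃ i, s(u, w) ∈ (P i).edges) :
    IsMinSep G a b (Set.range x) := by
  classical
  have hb : ∀ i, b ∉ ((P i).takeUntil (x i) (hx i)).support := fun i =>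
    Walk.endpoint_notMem_support_takeUntil (hP i) (hx i) (hxb i).symm
  let A : Set V := {u | u ∉ Set.range x ∧ ∃ i, u ∈ ((P i).takeUntil (x i) (hx i)).support}
  have hA : ∀ u ∈ A, ∀ w, G.Adj u w → w ∈ A ∨ w ∈ Set.range x := by
    rintro u ⟨hux, i, hu⟩ w huw
    by_cases hwx : w ∈ Set.range x
    · exact Or.inr hwx
    obtain ⟨j, he⟩ := hE u w huw hux hwx
    have huj : u ∈ ((P j).takeUntil (x j) (hx j)).support := by
      by_cases hij : i = j
      · exact hij ▸ hu
      rcases hPP i j hij u ((P i).support_takeUntil_subset_support _ hu)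
        ((P j).fst_mem_support_of_mem_edges he) with rfl | rfl
      exacts [Walk.start_mem_support _, absurd hu (hb i)]
    exact Or.inl ⟨hwx, j, (hP j).mem_support_takeUntil_of_mem_edges (hx j) huj
      (fun h => hux ⟨j, h.symm⟩) he⟩
  have haA : a ∈ A := ⟨fun ⟨i, h⟩ => hxa i h, Classical.arbitrary ι, Walk.start_mem_support _⟩
  refine ⟨isSep_of_closed A hA haA (fun ⟨_, i, h⟩ => hb i h) (fun ⟨i, h⟩ => hxa i h)
    (fun ⟨i, h⟩ => hxb i h), fun T hT hTsep => ?_⟩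
  obtain ⟨_, ⟨i, rfl⟩, hxiT⟩ := Set.exists_of_ssubset hT
  refine hTsep.2.2 ⟨P i, fun v hv hvT => ?_⟩
  obtain ⟨j, rfl⟩ := hT.subset hvT
  by_cases hij : i = j
  · exact hxiT (hij ▸ hvT)
  · exact (hPP j i (Ne.symm hij) _ (hx j) hv).elim (hxa j) (hxb j)

theorem not_memGk_two_of_three_paths {G : SimpleGraph V} {a b : V} (P : Fin 3 → G.Walk a b)
    (x : Fin 3 → V) (hP : ∀ i, (P i).IsPath)
    (hPP : ∀ i j, i < j → ∀ u ∈ (P i).support, u ∈ (P j).support → u = a ∨ u = b)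
    (hx : ∀ i, x i ∈ (P i).support) (hxa : ∀ i, x i ≠ a) (hxb : ∀ i, x i ≠ b)
    (hindep : ∀ i j, i < j → ¬ G.Adj (x i) (x j))
    (hE : ∀ u w, G.Adj u w → u ∉ Set.range x → w ∉ Set.range x →
      ∃ i, s(u, w) ∈ (P i).edges) :
    ¬ MemGk 2 G := by
  replace hPP : ∀ i j, i ≠ j → ∀ u ∈ (P i).support, u ∈ (P j).support → u = a ∨ u = b := by
    intro i j hij u hi hj
    rcases hij.lt_or_gt with h | h
    exacts [hPP i j h u hi hj, hPP j i h u hj hi]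
  have hinj : Function.Injective x := fun i j h => by_contra fun hij =>
    (hPP i j hij _ (hx i) (h ▸ hx j)).elim (hxa i) (hxb i)
  have hindep' : ∀ i j, ¬ G.Adj (x i) (x j) := by
    intro i j hij
    rcases lt_trichotomy i j with h | rfl | h
    exacts [hindep i j h hij, hij.ne rfl, hindep j i h hij.symm]
  exact fun hG => not_unionOfCliques_of_injective x hinj Set.mem_range_self hindep'
    (hG _ (isMinSep_range_of_paths P x hP hPP hx hxa hxb hE).isMinimalSeparator)

theorem not_memGk_two_of_isTheta {G : SimpleGraph V} (h : IsTheta G) : ¬ MemGk 2 G := by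
  obtain ⟨a, b, P₁, P₂, P₃, -, hp₁, hp₂, hp₃, hl₁, hl₂, hl₃, h₁₂, h₁₃, h₂₃, -, hE⟩ := h
  let P : Fin 3 → G.Walk a b := ![P₁, P₂, P₃]
  have hP : ∀ i, (P i).IsPath ∧ 2 ≤ (P i).length := by
    intro i; fin_cases i
    exacts [⟨hp₁, hl₁⟩, ⟨hp₂, hl₂⟩, ⟨hp₃, hl₃⟩]
  have hPP : ∀ i j, i ≠ j → ∀ u ∈ (P i).support, u ∈ (P j).support → u = a ∨ u = b := by
    intro i j hij u hi hj
    fin_cases i <;> fin_cases j <;> simp_all [P]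
  have hE' : ∀ u w, G.Adj u w ↔ ∃ i, s(u, w) ∈ (P i).edges := by
    simp [Fin.exists_fin_succ, P, hE]
  have hx : ∀ i, (P i).snd ≠ a ∧ (P i).snd ≠ b := fun i =>
    ⟨Walk.snd_ne_start (by linarith [(hP i).2]), (hP i).1.snd_ne_end (hP i).2⟩
  have hsnd : ∀ i j, (P j).snd ∈ (P i).support → i = j := fun i j h =>
    by_contra fun hij =>
      (hPP j i (Ne.symm hij) _ (Walk.getVert_mem_support _ _) h).elim (hx j).1 (hx j).2
  refine not_memGk_two_of_three_paths P (fun i => (P i).snd) (fun i => (hP i).1)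
    (fun i j hij => hPP i j hij.ne) (fun i => Walk.getVert_mem_support _ _)
    (fun i => (hx i).1) (fun i => (hx i).2) (fun i j hij hadj => hij.ne ?_)
    (fun u w huw _ _ => (hE' u w).1 huw)
  obtain ⟨k, he⟩ := (hE' _ _).1 hadj
  exact (hsnd k i ((P k).fst_mem_support_of_mem_edges he)).symm.trans
    (hsnd k j ((P k).snd_mem_support_of_mem_edges he))

theorem not_memGk_two_of_pyramid {G : SimpleGraph V} {a b₁ b₂ b₃ : V}
    {P₁ : G.Walk a b₁} {P₂ : G.Walk a b₂} {P₃ : G.Walk a b₃}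
    (e₁₂ : G.Adj b₁ b₂) (e₁₃ : G.Adj b₁ b₃)
    (hp₁ : P₁.IsPath) (hp₂ : P₂.IsPath) (hp₃ : P₃.IsPath)
    (hl₁ : 2 ≤ P₁.length) (hl₂ : 2 ≤ P₂.length) (hl₃ : 1 ≤ P₃.length)
    (h₁₂ : ∀ v ∈ P₁.support, v ∈ P₂.support → v = a)
    (h₁₃ : ∀ v ∈ P₁.support, v ∈ P₃.support → v = a)
    (h₂₃ : ∀ v ∈ P₂.support, v ∈ P₃.support → v = a)
    (hE : ∀ u v : V, G.Adj u v ↔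
      s(u, v) ∈ P₁.edges ∨ s(u, v) ∈ P₂.edges ∨ s(u, v) ∈ P₃.edges ∨
      s(u, v) = s(b₁, b₂) ∨ s(u, v) = s(b₁, b₃) ∨ s(u, v) = s(b₂, b₃)) :
    ¬ MemGk 2 G := by
  have ha₁ := hp₁.ne_of_one_le_length (by omega)
  have ha₃ := hp₃.ne_of_one_le_length hl₃
  have hc₁ : P₁.snd ∈ P₁.support := Walk.getVert_mem_support _ _
  have hc₂ : P₂.snd ∈ P₂.support := Walk.getVert_mem_support _ _
  have hc₁a := Walk.snd_ne_start (p := P₁) (by omega)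
  have hc₂a := Walk.snd_ne_start (p := P₂) (by omega)
  have hc₁b := hp₁.snd_ne_end hl₁
  have hc₂b := hp₂.snd_ne_end hl₂
  have hb₁ := P₁.end_mem_support
  have hb₂ := P₂.end_mem_support
  have hb₃ := P₃.end_mem_support
  let R : Fin 3 → G.Walk a b₁ := ![P₁, P₂.concat e₁₂.symm, P₃.concat e₁₃.symm]
  refine not_memGk_two_of_three_paths R ![P₁.snd, P₂.snd, b₃] ?_ ?_ ?_ ?_ ?_ ?_ ?_
  · intro i
    fin_cases i
    · exact hp₁
    · exact hp₂.concat (fun h => ha₁ (h₁₂ _ hb₁ h).symm) _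
    · exact hp₃.concat (fun h => ha₁ (h₁₃ _ hb₁ h).symm) _
  · intro i j hij u hi hj
    rcases lt_cases_fin_three hij with ⟨rfl, rfl⟩ | ⟨rfl, rfl⟩ | ⟨rfl, rfl⟩ <;>
      simp [R, Walk.support_concat] at hi hj ⊢ <;> grind
  · intro i; fin_cases i <;> simp [R, Walk.support_concat, hc₁, hc₂, hb₃]
  · intro i; fin_cases i
    exacts [hc₁a, hc₂a, ha₃.symm]
  · intro i; fin_cases i
    exacts [hc₁b, fun h => ha₁ (h₁₂ _ hb₁ (h ▸ hc₂)).symm, e₁₃.ne.symm]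
  · intro i j hij
    rw [hE]
    rcases lt_cases_fin_three hij with ⟨rfl, rfl⟩ | ⟨rfl, rfl⟩ | ⟨rfl, rfl⟩ <;> simp <;>
      grind [Walk.fst_mem_support_of_mem_edges, Walk.snd_mem_support_of_mem_edges]
  · intro u w huw hu hw
    simp only [hE, Sym2.eq_iff] at huw
    simp only [Matrix.range_cons, Matrix.range_empty, Set.union_empty, Set.union_singleton,
      Set.union_insert, Set.mem_insert_iff, Set.mem_singleton_iff, not_or] at hu hw
    simp only [Fin.exists_fin_succ, Matrix.cons_val_zero, Matrix.cons_val_succ,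
      Matrix.cons_val_fin_one, exists_const, R, Walk.edges_concat, List.concat_eq_append,
      List.mem_cons, List.mem_append, Sym2.eq_iff]
    grind

theorem not_memGk_two_of_isPyramid {G : SimpleGraph V} (h : IsPyramid G) : ¬ MemGk 2 G := by
  obtain ⟨a, b₁, b₂, b₃, P₁, P₂, P₃, e₁₂, e₁₃, e₂₃, hp₁, hp₂, hp₃, hl₁, hl₂, hl₃, hlong,
    h₁₂, h₁₃, h₂₃, -, hE⟩ := h
  rcases hlong with ⟨l₁, l₂⟩ | ⟨l₁, l₃⟩ | ⟨l₂, l₃⟩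
  · exact not_memGk_two_of_pyramid e₁₂ e₁₃ hp₁ hp₂ hp₃ l₁ l₂ hl₃ h₁₂ h₁₃ h₂₃ hE
  · refine not_memGk_two_of_pyramid e₁₃ e₁₂ hp₁ hp₃ hp₂ l₁ l₃ hl₂ h₁₃ h₁₂
      (fun v hv hv' => h₂₃ v hv' hv) fun u v => ?_
    rw [hE, Sym2.eq_swap (a := b₃) (b := b₂)]
    tauto
  · refine not_memGk_two_of_pyramid e₂₃ e₁₂.symm hp₂ hp₃ hp₁ l₂ l₃ hl₁ h₂₃
      (fun v hv hv' => h₁₂ v hv' hv) (fun v hv hv' => h₁₃ v hv' hv) fun u v => ?_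
    rw [hE, Sym2.eq_swap (a := b₂) (b := b₁), Sym2.eq_swap (a := b₃) (b := b₁)]
    tauto

theorem not_memGk_two_of_prism {G : SimpleGraph V} {a₁ a₂ a₃ b₁ b₂ b₃ : V}
    {P₁ : G.Walk a₁ b₁} {P₂ : G.Walk a₂ b₂} {P₃ : G.Walk a₃ b₃}
    (ea₁₂ : G.Adj a₁ a₂) (ea₁₃ : G.Adj a₁ a₃) (eb₁₂ : G.Adj b₁ b₂) (eb₂₃ : G.Adj b₂ b₃)
    (hp₁ : P₁.IsPath) (hp₂ : P₂.IsPath) (hp₃ : P₃.IsPath)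
    (hl₁ : 2 ≤ P₁.length) (hl₂ : 1 ≤ P₂.length) (hl₃ : 1 ≤ P₃.length)
    (h₁₂ : ∀ v ∈ P₁.support, v ∉ P₂.support) (h₁₃ : ∀ v ∈ P₁.support, v ∉ P₃.support)
    (h₂₃ : ∀ v ∈ P₂.support, v ∉ P₃.support)
    (hE : ∀ u v : V, G.Adj u v ↔
      s(u, v) ∈ P₁.edges ∨ s(u, v) ∈ P₂.edges ∨ s(u, v) ∈ P₃.edges ∨
      s(u, v) = s(a₁, a₂) ∨ s(u, v) = s(a₁, a₃) ∨ s(u, v) = s(a₂, a₃) ∨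
      s(u, v) = s(b₁, b₂) ∨ s(u, v) = s(b₁, b₃) ∨ s(u, v) = s(b₂, b₃)) :
    ¬ MemGk 2 G := by
  have hab₂ := hp₂.ne_of_one_le_length hl₂
  have hab₃ := hp₃.ne_of_one_le_length hl₃
  have hc := Walk.getVert_mem_support P₁ 1
  have hca := Walk.snd_ne_start (p := P₁) (by omega)
  have hcb := hp₁.snd_ne_end hl₁
  have ha₁ := P₁.start_mem_support
  have ha₂ := P₂.start_mem_support
  have ha₃ := P₃.start_mem_support
  have hb₁ := P₁.end_mem_support
  have hb₂ := P₂.end_mem_support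
  have hb₃ := P₃.end_mem_support
  let R : Fin 3 → G.Walk a₁ b₂ :=
    ![P₁.concat eb₁₂, .cons ea₁₂ P₂, .cons ea₁₃ (P₃.concat eb₂₃.symm)]
  refine not_memGk_two_of_three_paths R ![P₁.snd, a₂, b₃] ?_ ?_ ?_ ?_ ?_ ?_ ?_
  · intro i
    fin_cases i
    · exact hp₁.concat (h₁₂ b₂ · hb₂) _
    · exact hp₂.cons (h₁₂ a₁ ha₁)
    · refine (hp₃.concat (h₂₃ b₂ hb₂) _).cons ?_
      simp only [Walk.support_concat, List.mem_append, List.mem_singleton, not_or]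
      exact ⟨h₁₃ a₁ ha₁, fun h => h₁₂ a₁ ha₁ (h ▸ hb₂)⟩
  · intro i j hij u hi hj
    rcases lt_cases_fin_three hij with ⟨rfl, rfl⟩ | ⟨rfl, rfl⟩ | ⟨rfl, rfl⟩ <;>
      simp [R, Walk.support_concat] at hi hj ⊢ <;> grind
  · intro i; fin_cases i <;> simp [R, Walk.support_concat, hc]
  · intro i; fin_cases i
    exacts [hca, ea₁₂.ne.symm, fun h => h₁₃ a₁ ha₁ (h ▸ hb₃)]
  · intro i; fin_cases i
    exacts [fun h => h₁₂ _ hc (h ▸ hb₂), hab₂, eb₂₃.ne.symm]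
  · intro i j hij
    rw [hE]
    rcases lt_cases_fin_three hij with ⟨rfl, rfl⟩ | ⟨rfl, rfl⟩ | ⟨rfl, rfl⟩ <;> simp <;>
      grind [Walk.fst_mem_support_of_mem_edges, Walk.snd_mem_support_of_mem_edges]
  · intro u w huw hu hw
    simp only [hE, Sym2.eq_iff] at huw
    simp only [Matrix.range_cons, Matrix.range_empty, Set.union_empty, Set.union_singleton,
      Set.union_insert, Set.mem_insert_iff, Set.mem_singleton_iff, not_or] at hu hw
    simp only [Fin.exists_fin_succ, Matrix.cons_val_zero, Matrix.cons_val_succ,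
      Matrix.cons_val_fin_one, exists_const, R, Walk.edges_concat, List.concat_eq_append,
      Walk.edges_cons, List.mem_cons, List.mem_append, Sym2.eq_iff]
    grind

theorem not_memGk_two_of_isLongPrism {G : SimpleGraph V} (h : IsLongPrism G) : ¬ MemGk 2 G := by
  obtain ⟨a₁, a₂, a₃, b₁, b₂, b₃, P₁, P₂, P₃, ea₁₂, ea₁₃, ea₂₃, eb₁₂, eb₁₃, eb₂₃,
    hp₁, hp₂, hp₃, hl₁, hl₂, hl₃, hlong, h₁₂, h₁₃, h₂₃, -, hE⟩ := h
  rcases hlong with l₁ | l₂ | l₃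
  · exact not_memGk_two_of_prism ea₁₂ ea₁₃ eb₁₂ eb₂₃ hp₁ hp₂ hp₃ l₁ hl₂ hl₃ h₁₂ h₁₃ h₂₃ hE
  · refine not_memGk_two_of_prism ea₁₂.symm ea₂₃ eb₁₂.symm eb₁₃ hp₂ hp₁ hp₃ l₂ hl₁ hl₃
      (fun v hv hv' => h₁₂ v hv' hv) h₂₃ h₁₃ fun u v => ?_
    rw [hE, Sym2.eq_swap (a := a₂) (b := a₁), Sym2.eq_swap (a := b₂) (b := b₁)]
    tauto
  · refine not_memGk_two_of_prism ea₁₃.symm ea₂₃.symm eb₁₃.symm eb₁₂ hp₃ hp₁ hp₂ l₃ hl₁ hl₂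
      (fun v hv hv' => h₁₃ v hv' hv) (fun v hv hv' => h₂₃ v hv' hv) h₁₂ fun u v => ?_
    rw [hE, Sym2.eq_swap (a := a₃) (b := a₁), Sym2.eq_swap (a := a₃) (b := a₂),
      Sym2.eq_swap (a := b₃) (b := b₁), Sym2.eq_swap (a := b₃) (b := b₂)]
    tauto

theorem exists_mem_support_notMem_of_not_reachable {G : SimpleGraph V} {N : Set V} {p q : N}
    (h : ¬ (G.induce N).Reachable p q) (W : G.Walk p q) : ∃ u ∈ W.support, u ∉ N := by
  by_contra! hW
  exact h ⟨W.induce N hW⟩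

theorem not_memGk_two_of_hole {G : SimpleGraph V} {p q v g₁ g₂ : V} {X Y : G.Walk p q}
    (hpq : p ≠ q) (hX : X.IsPath) (hY : Y.IsPath)
    (hXY : ∀ u ∈ X.support, u ∈ Y.support → u = p ∨ u = q)
    (hhole : ∀ u w, u ≠ v → w ≠ v → G.Adj u w → s(u, w) ∈ X.edges ∨ s(u, w) ∈ Y.edges)
    (hvX : v ∉ X.support) (hvY : v ∉ Y.support) (hvp : G.Adj v p) (hvq : G.Adj v q)
    (hg₁ : g₁ ∈ X.support) (hg₂ : g₂ ∈ Y.support) (hvg₁ : ¬ G.Adj v g₁)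
    (hvg₂ : ¬ G.Adj v g₂) :
    ¬ MemGk 2 G := by
  have hg₁p : g₁ ≠ p := fun h => hvg₁ (h ▸ hvp)
  have hg₁q : g₁ ≠ q := fun h => hvg₁ (h ▸ hvq)
  have hg₂p : g₂ ≠ p := fun h => hvg₂ (h ▸ hvp)
  have hg₂q : g₂ ≠ q := fun h => hvg₂ (h ▸ hvq)
  have hg₁₂ : ¬ G.Adj g₁ g₂ := fun h => by
    rcases hhole g₁ g₂ (fun e => hvX (e ▸ hg₁)) (fun e => hvY (e ▸ hg₂)) h with he | he
    · exact (hXY g₂ (X.snd_mem_support_of_mem_edges he) hg₂).elim hg₂p hg₂q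
    · exact (hXY g₁ hg₁ (Y.fst_mem_support_of_mem_edges he)).elim hg₁p hg₁q
  let Z : G.Walk p q := .cons hvp.symm (.cons hvq .nil)
  have hZ : ∀ u ∈ Z.support, u = p ∨ u = v ∨ u = q := by simp [Z]
  refine not_memGk_two_of_three_paths ![X, Y, Z] ![g₁, g₂, v] ?_ ?_ ?_ ?_ ?_ ?_ ?_
  · intro i; fin_cases i
    exacts [hX, hY, by simp [Z, hpq, hvp.ne.symm, hvq.ne]]
  · intro i j hij u hi hj
    rcases lt_cases_fin_three hij with ⟨rfl, rfl⟩ | ⟨rfl, rfl⟩ | ⟨rfl, rfl⟩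
    · exact hXY u hi hj
    · rcases hZ u hj with h | rfl | h
      exacts [Or.inl h, absurd hi hvX, Or.inr h]
    · rcases hZ u hj with h | rfl | h
      exacts [Or.inl h, absurd hi hvY, Or.inr h]
  · intro i; fin_cases i
    exacts [hg₁, hg₂, by simp [Z]]
  · intro i; fin_cases i
    exacts [hg₁p, hg₂p, hvp.ne]
  · intro i; fin_cases i
    exacts [hg₁q, hg₂q, hvq.ne]
  · intro i j hij
    rcases lt_cases_fin_three hij with ⟨rfl, rfl⟩ | ⟨rfl, rfl⟩ | ⟨rfl, rfl⟩
    exacts [hg₁₂, fun h => hvg₁ h.symm, fun h => hvg₂ h.symm]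
  · intro u w huw hu hw
    rcases hhole u w (fun h => hu ⟨2, h.symm⟩) (fun h => hw ⟨2, h.symm⟩) huw with he | he
    exacts [⟨0, he⟩, ⟨1, he⟩]

theorem not_memGk_two_of_isBrokenWheel {G : SimpleGraph V} (h : IsBrokenWheel G) :
    ¬ MemGk 2 G := by
  obtain ⟨v, x, c, hc, -, hv, hcov, hhole, hcard, hdisc⟩ := h
  set N := {u | u ∈ c.support ∧ G.Adj v u}
  obtain ⟨p, q, hpq⟩ : ∃ p q : N, ¬ (G.induce N).Reachable p q := by
    have : Nonempty N := (Set.nonempty_of_ncard_ne_zero (by omega)).to_subtype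
    by_contra! h
    exact hdisc ⟨h⟩
  have hpq' : (p : V) ≠ q := fun e => hpq (Subtype.ext e ▸ Reachable.refl _)
  obtain ⟨X, Y, hX, hY, hXY, hsupp, hedges⟩ := hc.exists_isPath_union p.2.1 q.2.1 hpq'
  obtain ⟨g₁, hg₁X, hg₁⟩ := exists_mem_support_notMem_of_not_reachable hpq X
  obtain ⟨g₂, hg₂Y, hg₂⟩ := exists_mem_support_notMem_of_not_reachable hpq Y
  have hmem : ∀ u, u ≠ v → u ∈ c.support := fun u hu => (hcov u).resolve_left hu
  refine not_memGk_two_of_hole hpq' hX hY hXY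
    (fun u w hu hw huw => hedges _ (hhole u w (hmem u hu) (hmem w hw) huw))
    (fun h => hv ((hsupp v).2 (Or.inl h))) (fun h => hv ((hsupp v).2 (Or.inr h))) p.2.2 q.2.2
    hg₁X hg₂Y (fun h => hg₁ ⟨(hsupp g₁).2 (Or.inl hg₁X), h⟩)
    (fun h => hg₂ ⟨(hsupp g₂).2 (Or.inr hg₂Y), h⟩)

/-- every graph in `𝒢_2` is (theta, pyramid, long prism, broken
wheel)-free, i.e. has no induced subgraph that is a theta, pyramid, long prism, or broken
wheel. -/
theorem statement_15 (V : Type) [Finite V] (G : SimpleGraph V) (hG : MemGk 2 G)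
    (s : Set V) :
    ¬ IsTheta (G.induce s) ∧ ¬ IsPyramid (G.induce s) ∧
    ¬ IsLongPrism (G.induce s) ∧ ¬ IsBrokenWheel (G.induce s) := by
  have hs := hG.induce s
  exact ⟨fun h => not_memGk_two_of_isTheta h hs, fun h => not_memGk_two_of_isPyramid h hs,
    fun h => not_memGk_two_of_isLongPrism h hs, fun h => not_memGk_two_of_isBrokenWheel h hs⟩

end PaperSep
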